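/- arXiv:2508.11907 — 2 statements merged into one kernel-verified Lean document; each statement's English description precedes it below -/
import Mathlib

section
/- If a randomized mechanism M satisfies ξ-local differential privacy (i.e., for all inputs d, d' and all measurable output sets S, Pr[M(d) ∈ S] ≤ e^ξ · Pr[M(d') ∈ S]), then it satisfies ξ-maximum Bayesian privacy: for any prior density f_D on inputs and any output w with positive marginal density, e^{-ξ} ≤ f_{D|W}(d|w)/f_D(d) ≤ e^{ξ} for all d. -/
open Real

/-- ξ-LDP implies ξ-MBP on a finite input/output space.
`f d w` is the conditional probability `f_{W|D}(w|d)`, `p` is the prior. -/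
theorem ldp_implies_mbp {D W : Type*} [Fintype D] [Fintype W]
    (ξ : ℝ) (f : D → W → ℝ)
    (hf_nonneg : ∀ d w, 0 ≤ f d w)
    (hLDP : ∀ d d' : D, ∀ w : W, f d w ≤ Real.exp ξ * f d' w)
    (p : D → ℝ) (hp_pos : ∀ d, 0 < p d) (hp_sum : ∑ d, p d = 1)
    (w : W) (hw : 0 < ∑ d', f d' w * p d') :
    ∀ d : D,
      Real.exp (-ξ) ≤ (f d w * p d / ∑ d', f d' w * p d') / p d ∧
      (f d w * p d / ∑ d', f d' w * p d') / p d ≤ Real.exp ξ := by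
  intro d
  set S : ℝ := ∑ d', f d' w * p d' with hS
  have hpd := hp_pos d
  have hratio : (f d w * p d / S) / p d = f d w / S := by
    field_simp
  rw [hratio]
  constructor
  · -- S ≤ e^ξ * f d w
    have hub : S ≤ Real.exp ξ * f d w := by
      calc S = ∑ d', f d' w * p d' := rfl
        _ ≤ ∑ d', (Real.exp ξ * f d w) * p d' := by
            apply Finset.sum_le_sum
            intro i _
            exact mul_le_mul_of_nonneg_right (hLDP i d w) (hp_pos i).le
        _ = Real.exp ξ * f d w * ∑ d', p d' := by rw [← Finset.mul_sum]
        _ = Real.exp ξ * f d w := by rw [hp_sum, mul_one]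
    rw [Real.exp_neg, le_div_iff₀ hw, inv_mul_le_iff₀ (Real.exp_pos ξ)]
    nlinarith [hub]
  · -- f d w ≤ e^ξ * S
    have hlb : f d w ≤ Real.exp ξ * S := by
      calc f d w = ∑ d', f d w * p d' := by
            rw [← Finset.mul_sum, hp_sum, mul_one]
        _ ≤ ∑ d', (Real.exp ξ * f d' w) * p d' := by
            apply Finset.sum_le_sum
            intro i _
            exact mul_le_mul_of_nonneg_right (hLDP d i w) (hp_pos i).le
        _ = Real.exp ξ * S := by rw [hS, Finset.mul_sum]; exact Finset.sum_congr rfl (fun i _ => by ring)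
    rw [div_le_iff₀ hw]
    nlinarith [hlb]
end

section
/- If a randomized mechanism satisfies ξ-maximum Bayesian privacy with respect to every prior distribution on a finite input space, then it satisfies 2ξ-local differential privacy. -/
open Real

/-!
Feed the mechanism one fixed positive prior `p`, e.g. the uniform one. The posterior-to-prior
ratio at `d` is `f d w / S` with `S = ∑ d', f d' w * p d'` independent of `d`, so ξ-MBP pins
every `f d w` into `[e^{-ξ} S, e^ξ S]`; two such values differ by a factor of at most `e^{2ξ}`.
-/

theorem exists_pos_sum_eq_one (ι : Type*) [Fintype ι] [Nonempty ι] :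
    ∃ p : ι → ℝ, (∀ i, 0 < p i) ∧ ∑ i, p i = 1 := by
  have hcard : (0 : ℝ) < Fintype.card ι := by exact_mod_cast Fintype.card_pos
  refine ⟨fun _ => (Fintype.card ι : ℝ)⁻¹, fun _ => inv_pos.mpr hcard, ?_⟩
  rw [Finset.sum_const, Finset.card_univ, nsmul_eq_mul, mul_inv_cancel₀ hcard.ne']

theorem posterior_div_prior {a p S : ℝ} (hp : p ≠ 0) : a * p / S / p = a / S := by
  rw [mul_div_right_comm, mul_div_cancel_right₀ _ hp]

theorem le_exp_two_mul_of_div_bounds {a b S ξ : ℝ} (hS : 0 < S)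
    (ha : a / S ≤ exp ξ) (hb : exp (-ξ) ≤ b / S) : a ≤ exp (2 * ξ) * b := by
  rw [div_le_iff₀ hS] at ha
  rw [le_div_iff₀ hS, exp_neg, inv_mul_le_iff₀ (exp_pos ξ)] at hb
  calc a ≤ exp ξ * S := ha
    _ ≤ exp ξ * (exp ξ * b) := by gcongr
    _ = exp (2 * ξ) * b := by rw [← mul_assoc, ← exp_add, two_mul]

/-- `f d w` is `f_{W|D}(w|d)`. -/
theorem mbp_implies_two_ldp_general {D W : Type*} [Fintype D]
    (ξ : ℝ) (f : D → W → ℝ)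
    (hf_pos : ∀ d w, 0 < f d w)
    (hMBP : ∀ p : D → ℝ, (∀ d, 0 < p d) → (∑ d, p d = 1) →
      ∀ (d : D) (w : W),
        Real.exp (-ξ) ≤ (f d w * p d / ∑ d', f d' w * p d') / p d ∧
        (f d w * p d / ∑ d', f d' w * p d') / p d ≤ Real.exp ξ) :
    ∀ (d d' : D) (w : W), f d w ≤ Real.exp (2 * ξ) * f d' w := by
  intro d d' w
  have : Nonempty D := ⟨d⟩
  obtain ⟨p, hp_pos, hp_sum⟩ := exists_pos_sum_eq_one D
  have hS : 0 < ∑ d'', f d'' w * p d'' :=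
    Finset.sum_pos (fun i _ => mul_pos (hf_pos i w) (hp_pos i)) Finset.univ_nonempty
  have h_upper := (hMBP p hp_pos hp_sum d w).2
  have h_lower := (hMBP p hp_pos hp_sum d' w).1
  rw [posterior_div_prior (hp_pos d).ne'] at h_upper
  rw [posterior_div_prior (hp_pos d').ne'] at h_lower
  exact le_exp_two_mul_of_div_bounds hS h_upper h_lower

/-- If a mechanism satisfies ξ-MBP with respect to every prior on a finite
input space, then it satisfies 2ξ-LDP. `f d w` is `f_{W|D}(w|d)`. -/
theorem mbp_implies_two_ldp {D W : Type*} [Fintype D] [Fintype W] [Nonempty D]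
    (ξ : ℝ) (f : D → W → ℝ)
    (hf_pos : ∀ d w, 0 < f d w)
    (hMBP : ∀ p : D → ℝ, (∀ d, 0 < p d) → (∑ d, p d = 1) →
      ∀ (d : D) (w : W),
        Real.exp (-ξ) ≤ (f d w * p d / ∑ d', f d' w * p d') / p d ∧
        (f d w * p d / ∑ d', f d' w * p d') / p d ≤ Real.exp ξ) :
    ∀ (d d' : D) (w : W), f d w ≤ Real.exp (2 * ξ) * f d' w :=
  mbp_implies_two_ldp_general ξ f hf_pos hMBP
end
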